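/- arXiv:2007.07492 — 3 statements merged into one kernel-verified Lean document; each statement's English description precedes it below -/
import Mathlib

section
/- Let Γ be a closed d-ADR set in ℝⁿ with d < n-1. Then there exists c ∈ (0,1), depending only on n, d, and the ADR constant C_d, such that for every x ∈ Γ and r > 0 there exists a point X ∈ ℝⁿ \ Γ with B(X, cr) ⊂ B(x,r) \ Γ. (Existence of interior Corkscrew points.) -/
open Metric MeasureTheory Set Filter Topology
open scoped ENNReal NNReal

/-!
If `B(x, r)` contains no ball of radius `ρ = c r` missing `Γ`, then every point of
`B(x, r/2)` lies within `ρ` of `Γ ∩ B̄(x, r)`. A maximal `2ρ`-separated subset of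
`Γ ∩ B̄(x, r)` then covers `B(x, r/2)` by balls of radius `3ρ`, so by volume it has at least
`(6c)⁻ⁿ` points; the lower ADR bound at its points and the upper bound at `x` say it has at
most `C² 2ᵈ c⁻ᵈ` points. Since `d < n`, these are incompatible once `c` is small.
-/

theorem IsCompact.exists_finset_pairwise_lt_dist_subset_iUnion_closedBall {X : Type*}
    [PseudoMetricSpace X] {s : Set X} (hs : IsCompact s) {ε : ℝ} (hε : 0 < ε) :
    ∃ u : Finset X, ↑u ⊆ s ∧ (u : Set X).Pairwise (fun a b => ε < dist a b) ∧
      s ⊆ ⋃ a ∈ u, closedBall a ε := by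
  lift ε to ℝ≥0 using hε.le
  have hpack : packingNumber ε s ≠ ⊤ := by
    obtain ⟨N, -, hNfin, hN⟩ := exists_finite_isCover_of_isCompact (ε := ε / 2)
      (by simpa using hε.ne') hs
    refine ne_top_of_le_ne_top hNfin.encard_lt_top.ne ?_
    calc packingNumber ε s = packingNumber (2 * (ε / 2)) s := by
          rw [mul_div_cancel₀ _ two_ne_zero]
      _ ≤ externalCoveringNumber (ε / 2) s := packingNumber_two_mul_le_externalCoveringNumber _ _
      _ ≤ N.encard := hN.externalCoveringNumber_le_encard
  have hfin : (maximalSeparatedSet ε s).Finite :=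
    Set.encard_ne_top_iff.mp (by rwa [encard_maximalSeparatedSet hpack])
  refine ⟨hfin.toFinset, by simpa using maximalSeparatedSet_subset, ?_, ?_⟩
  · intro a ha b hb hab
    rw [Set.Finite.coe_toFinset] at ha hb
    simpa [edist_dist] using isSeparated_maximalSeparatedSet ha hb hab
  · simpa using isCover_iff_subset_iUnion_closedBall.mp (isCover_maximalSeparatedSet hpack)

theorem ball_subset_thickening_of_forall_not_subset {X : Type*} [PseudoMetricSpace X]
    {Γ : Set X} {x : X} {r ρ : ℝ} (hno : ∀ Y, ¬ ball Y ρ ⊆ ball x r \ Γ) :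
    ball x (r - ρ) ⊆ thickening ρ (Γ ∩ ball x r) := by
  intro Y hY
  by_contra hYΓ
  refine hno Y fun w hw => ?_
  have hwx : w ∈ ball x r := ball_subset_ball' (by linarith [mem_ball.mp hY]) hw
  exact ⟨hwx, fun hwΓ =>
    hYΓ (mem_thickening_iff.mpr ⟨w, ⟨hwΓ, hwx⟩, mem_ball'.mp hw⟩)⟩

theorem thickening_subset_iUnion_ball_of_subset_iUnion_closedBall {X ι : Type*}
    [PseudoMetricSpace X] {S : Set X} {N : Set ι} {c : ι → X} {δ ε : ℝ}
    (h : S ⊆ ⋃ i ∈ N, closedBall (c i) ε) :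
    thickening δ S ⊆ ⋃ i ∈ N, ball (c i) (δ + ε) := by
  intro Y hY
  obtain ⟨z, hz, hYz⟩ := mem_thickening_iff.mp hY
  obtain ⟨i, hi, hzi⟩ := mem_iUnion₂.mp (h hz)
  exact mem_iUnion₂.mpr
    ⟨i, hi, (dist_triangle _ _ _).trans_lt (add_lt_add_of_lt_of_le hYz hzi)⟩

theorem card_mul_le_measure_of_pairwise_lt_dist {X : Type*} [PseudoMetricSpace X]
    [MeasurableSpace X] [OpensMeasurableSpace X] (μ : Measure X) {u : Finset X} {ρ : ℝ}
    (hsep : (u : Set X).Pairwise (fun a b => 2 * ρ < dist a b)) {m : ℝ≥0∞}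
    (hm : ∀ a ∈ u, m ≤ μ (ball a ρ)) {t : Set X} (ht : ∀ a ∈ u, ball a ρ ⊆ t) :
    u.card * m ≤ μ t :=
  calc u.card * m = ∑ _a ∈ u, m := by rw [Finset.sum_const, nsmul_eq_mul]
    _ ≤ ∑ a ∈ u, μ (ball a ρ) := Finset.sum_le_sum hm
    _ = μ (⋃ a ∈ u, ball a ρ) := by
      refine (measure_biUnion_finset (fun a ha b hb hab => ?_)
        fun _ _ => measurableSet_ball).symm
      exact ball_disjoint_ball (by linarith [hsep ha hb hab])
    _ ≤ μ t := measure_mono (iUnion₂_subset ht)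

def AhlforsDavidRegular {X : Type*} [MetricSpace X] [MeasurableSpace X] [BorelSpace X]
    (Γ : Set X) (d C : ℝ) : Prop :=
  ∀ x ∈ Γ, ∀ r : ℝ, 0 < r →
    ENNReal.ofReal (C⁻¹ * r ^ d) ≤ μH[d] (Γ ∩ ball x r) ∧
    μH[d] (Γ ∩ ball x r) ≤ ENNReal.ofReal (C * r ^ d)

theorem AhlforsDavidRegular.card_mul_rpow_le {X : Type*} [MetricSpace X] [MeasurableSpace X]
    [BorelSpace X] {Γ : Set X} {d C : ℝ} (hΓ : AhlforsDavidRegular Γ d C) (hC : 0 < C)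
    {x : X} (hx : x ∈ Γ) {r c : ℝ} (hr : 0 < r) (hc0 : 0 < c) (hc1 : c ≤ 1) {u : Finset X}
    (hu : ↑u ⊆ Γ ∩ closedBall x r)
    (hsep : (u : Set X).Pairwise (fun a b => 2 * (c * r) < dist a b)) :
    u.card * c ^ d ≤ C ^ 2 * 2 ^ d := by
  have hcr : 0 < c * r := by positivity
  have hcount := card_mul_le_measure_of_pairwise_lt_dist (μH[d].restrict Γ) hsep
    (m := ENNReal.ofReal (C⁻¹ * (c * r) ^ d)) (t := ball x (2 * r))
    (fun a ha => by
      rw [Measure.restrict_apply measurableSet_ball, inter_comm]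
      exact (hΓ a (hu ha).1 _ hcr).1)
    (fun a ha => ball_subset_ball'
      (by linarith [mem_closedBall.mp (hu ha).2, mul_le_of_le_one_left hr.le hc1]))
  rw [Measure.restrict_apply measurableSet_ball, inter_comm] at hcount
  have hreal := hcount.trans (hΓ x hx _ (by positivity)).2
  rw [← ENNReal.ofReal_natCast, ← ENNReal.ofReal_mul (by positivity),
    ENNReal.ofReal_le_ofReal_iff (by positivity), Real.mul_rpow hc0.le hr.le,
    Real.mul_rpow zero_le_two hr.le] at hreal
  refine le_of_mul_le_mul_right ?_ (by positivity : 0 < C⁻¹ * r ^ d)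
  calc u.card * c ^ d * (C⁻¹ * r ^ d) = u.card * (C⁻¹ * (c ^ d * r ^ d)) := by ring
    _ ≤ C * (2 ^ d * r ^ d) := hreal
    _ = C ^ 2 * 2 ^ d * (C⁻¹ * r ^ d) := by field_simp

theorem pow_finrank_le_card_mul_of_ball_subset_iUnion {E : Type*} [NormedAddCommGroup E]
    [NormedSpace ℝ E] [FiniteDimensional ℝ E] [MeasurableSpace E] [BorelSpace E]
    (μ : Measure E) [μ.IsAddHaarMeasure] {x : E} {R ρ : ℝ} (hR : 0 < R) (hρ : 0 < ρ)
    {u : Finset E} (h : ball x R ⊆ ⋃ a ∈ u, ball a ρ) :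
    R ^ Module.finrank ℝ E ≤ u.card * ρ ^ Module.finrank ℝ E := by
  have hV0 : μ (ball 0 1) ≠ 0 := (measure_ball_pos μ _ one_pos).ne'
  have hVtop : μ (ball 0 1) ≠ ⊤ := measure_ball_lt_top.ne
  have key : ENNReal.ofReal (R ^ Module.finrank ℝ E) * μ (ball 0 1)
      ≤ ENNReal.ofReal (u.card * ρ ^ Module.finrank ℝ E) * μ (ball 0 1) :=
    calc _ = μ (ball x R) := (Measure.addHaar_ball_of_pos μ x hR).symm
      _ ≤ μ (⋃ a ∈ u, ball a ρ) := measure_mono h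
      _ ≤ ∑ a ∈ u, μ (ball a ρ) := measure_biUnion_finset_le _ _
      _ = _ := by
        simp only [Measure.addHaar_ball_of_pos μ _ hρ, Finset.sum_const, nsmul_eq_mul]
        rw [ENNReal.ofReal_mul (by positivity), ENNReal.ofReal_natCast, mul_assoc]
  exact (ENNReal.ofReal_le_ofReal_iff (by positivity)).mp
    ((ENNReal.mul_le_mul_iff_left hV0 hVtop).mp key)

theorem one_half_pow_le_of_card_bounds {n : ℕ} {d A c r k : ℝ} (hc : 0 < c) (hr : 0 < r)
    (hpack : k * c ^ d ≤ A) (hcov : (r / 2) ^ n ≤ k * (3 * (c * r)) ^ n) :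
    (1 / 2) ^ n ≤ A * 3 ^ n * c ^ ((n : ℝ) - d) := by
  have hsplit : c ^ n = c ^ d * c ^ ((n : ℝ) - d) := by
    rw [← Real.rpow_add hc, ← Real.rpow_natCast, add_sub_cancel]
  have hscaled : (1 / 2) ^ n ≤ k * 3 ^ n * c ^ n := by
    refine le_of_mul_le_mul_right ?_ (pow_pos hr n)
    calc (1 / 2) ^ n * r ^ n = (r / 2) ^ n := by ring
      _ ≤ k * (3 * (c * r)) ^ n := hcov
      _ = k * 3 ^ n * c ^ n * r ^ n := by ring
  calc (1 / 2) ^ n ≤ k * 3 ^ n * c ^ n := hscaled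
    _ = k * c ^ d * (3 ^ n * c ^ ((n : ℝ) - d)) := by rw [hsplit]; ring
    _ ≤ A * (3 ^ n * c ^ ((n : ℝ) - d)) := by gcongr
    _ = A * 3 ^ n * c ^ ((n : ℝ) - d) := by ring

theorem exists_mem_Ioo_rpow_lt {p ε : ℝ} (hp : 0 < p) (hε : 0 < ε) {δ : ℝ} (hδ : 0 < δ) :
    ∃ c ∈ Ioo 0 δ, c ^ p < ε := by
  have hlim : Tendsto (fun c : ℝ => c ^ p) (𝓝[>] 0) (𝓝 0) := by
    simpa [Real.zero_rpow hp.ne'] using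
      ((Real.continuousAt_rpow_const 0 p (Or.inr hp.le)).tendsto).mono_left nhdsWithin_le_nhds
  exact ((eventually_mem_set.mpr (Ioo_mem_nhdsGT hδ)).and
    (hlim.eventually (gt_mem_nhds hε))).exists

theorem adr_corkscrew_points_general {n : ℕ} (Γ : Set (EuclideanSpace ℝ (Fin n)))
    (hΓ : IsClosed Γ) (d Cd : ℝ) (hdn : d < (n : ℝ) - 1)
    (hCd : 1 ≤ Cd)
    (hADR : ∀ x ∈ Γ, ∀ r : ℝ, 0 < r →
      ENNReal.ofReal (Cd⁻¹ * r ^ d) ≤ μH[d] (Γ ∩ ball x r) ∧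
      μH[d] (Γ ∩ ball x r) ≤ ENNReal.ofReal (Cd * r ^ d)) :
    ∃ c : ℝ, 0 < c ∧ c < 1 ∧ ∀ x ∈ Γ, ∀ r : ℝ, 0 < r →
      ∃ X : EuclideanSpace ℝ (Fin n), ball X (c * r) ⊆ ball x r \ Γ := by
  obtain ⟨c, ⟨hc0, hc_half⟩, hc_small⟩ := exists_mem_Ioo_rpow_lt (p := n - d) (by linarith)
    (ε := (1 / 2) ^ n / (Cd ^ 2 * 2 ^ d * 3 ^ n)) (by positivity) (δ := 1 / 2) (by norm_num)
  refine ⟨c, hc0, by linarith, fun x hx r hr => ?_⟩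
  by_contra! hno
  have hcr : 0 < c * r := by positivity
  obtain ⟨u, huS, husep, hucov⟩ := ((isCompact_closedBall x r).inter_left hΓ)
    |>.exists_finset_pairwise_lt_dist_subset_iUnion_closedBall (ε := 2 * (c * r)) (by positivity)
  have hpack : u.card * c ^ d ≤ Cd ^ 2 * 2 ^ d :=
    AhlforsDavidRegular.card_mul_rpow_le hADR (by linarith) hx hr hc0 (by linarith) huS husep
  have hcov : ball x (r / 2) ⊆ ⋃ a ∈ u, ball a (3 * (c * r)) :=
    calc ball x (r / 2) ⊆ ball x (r - c * r) := ball_subset_ball (by nlinarith)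
      _ ⊆ thickening (c * r) (Γ ∩ ball x r) := ball_subset_thickening_of_forall_not_subset hno
      _ ⊆ thickening (c * r) (Γ ∩ closedBall x r) :=
        thickening_subset_of_subset _ (inter_subset_inter_right _ ball_subset_closedBall)
      _ ⊆ ⋃ a ∈ u, ball a (c * r + 2 * (c * r)) :=
        thickening_subset_iUnion_ball_of_subset_iUnion_closedBall hucov
      _ = ⋃ a ∈ u, ball a (3 * (c * r)) := by ring_nf
  have hvol := pow_finrank_le_card_mul_of_ball_subset_iUnion volume (by positivity)
    (by positivity) hcov
  rw [finrank_euclideanSpace_fin] at hvol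
  have hbig := one_half_pow_le_of_card_bounds hc0 hr hpack hvol
  rw [lt_div_iff₀ (by positivity)] at hc_small
  linarith

/-- Existence of interior Corkscrew points for a closed `d`-ADR set `Γ ⊂ ℝⁿ` with `d < n-1`:
there is `c ∈ (0,1)` so that every surface ball `Δ(x,r)` admits a Corkscrew point `X` with
`B(X, cr) ⊆ B(x,r) \ Γ`. -/
theorem adr_corkscrew_points {n : ℕ} (Γ : Set (EuclideanSpace ℝ (Fin n)))
    (hΓ : IsClosed Γ) (hne : Γ.Nonempty) (d Cd : ℝ) (hd : 0 < d) (hdn : d < (n : ℝ) - 1)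
    (hCd : 1 ≤ Cd)
    (hADR : ∀ x ∈ Γ, ∀ r : ℝ, 0 < r →
      ENNReal.ofReal (Cd⁻¹ * r ^ d) ≤ μH[d] (Γ ∩ ball x r) ∧
      μH[d] (Γ ∩ ball x r) ≤ ENNReal.ofReal (Cd * r ^ d)) :
    ∃ c : ℝ, 0 < c ∧ c < 1 ∧ ∀ x ∈ Γ, ∀ r : ℝ, 0 < r →
      ∃ X : EuclideanSpace ℝ (Fin n), ball X (c * r) ⊆ ball x r \ Γ :=
  adr_corkscrew_points_general Γ hΓ d Cd hdn hCd hADR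
end

section
/- Let Ω_𝔽 be a sawtooth domain over a d-ADR set Γ with d ∈ (0, n-1), and σ⋆ the weighted surface measure on ∂Ω_𝔽 defined by σ⋆(E) = H^d(E∩Γ) + ∫_{E\Γ} dist(X,Γ)^{d+1-n} dH^{n-1}(X). Then σ⋆ is doubling: there exists C₃ > 1 with σ⋆(B(x,2r) ∩ ∂Ω_𝔽) ≤ C₃ σ⋆(B(x,r) ∩ ∂Ω_𝔽) for every x ∈ ∂Ω_𝔽 and r > 0. -/
open Metric
open scoped ENNReal

/-!
Compare `σ⋆(Δ⋆(x,2r))` and `σ⋆(Δ⋆(x,r))` according to where `δ = dist(x,Γ)` lies. If `δ < r/M₀`,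
use (a) at `2r` against (d) at `r`; if `δ > 2r/M₀`, use (b) at `2r` against (c) at `r`. In the
intermediate range `r/M₀ ≤ δ ≤ 2r/M₀` use (a) at `2r` against (c) at `r`: there `δ ≤ 2r`, and since
`d + 1 - n ≤ 0` this gives `δ^(d+1-n) r^(n-1) ≥ 2^(1-n) (2r)^d`. In each range the two bounds have
the same dependence on `r` and `δ`, so their ratio is a constant.
-/

lemma le_ofReal_mul_of_le_ofReal_of_ofReal_le {a b : ℝ≥0∞} {A B C : ℝ}
    (ha : a ≤ ENNReal.ofReal A) (hb : ENNReal.ofReal B ≤ b) (hC : 0 ≤ C) (hAB : A ≤ C * B) :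
    a ≤ ENNReal.ofReal C * b :=
  calc a ≤ ENNReal.ofReal (C * B) := ha.trans (ENNReal.ofReal_le_ofReal hAB)
    _ = ENNReal.ofReal C * ENNReal.ofReal B := ENNReal.ofReal_mul hC
    _ ≤ ENNReal.ofReal C * b := by gcongr

open Real in
lemma two_mul_rpow_le_of_le_two_mul {d m r δ : ℝ} (hdm : d ≤ m) (hδ : 0 < δ)
    (hδr : δ ≤ 2 * r) : (2 * r) ^ d ≤ 2 ^ m * (δ ^ (d - m) * r ^ m) := by
  have h2r : 0 < 2 * r := hδ.trans_le hδr
  calc (2 * r) ^ d = (2 * r) ^ (d - m) * (2 * r) ^ m := by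
        rw [← rpow_add h2r, sub_add_cancel]
    _ ≤ δ ^ (d - m) * (2 * r) ^ m :=
        mul_le_mul_of_nonneg_right (rpow_le_rpow_of_nonpos hδ hδr (sub_nonpos.2 hdm))
          (rpow_nonneg h2r.le m)
    _ = 2 ^ m * (δ ^ (d - m) * r ^ m) := by
        rw [mul_rpow zero_le_two (by linarith : (0 : ℝ) ≤ r)]
        ring

theorem sawtooth_surface_measure_doubling_general {n : ℕ}
    (d : ℝ) (hdn : d < (n : ℝ) - 1)
    (Γ S : Set (EuclideanSpace ℝ (Fin n)))
    (σs : Set (EuclideanSpace ℝ (Fin n)) → ℝ≥0∞)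
    (M0 V1 V2 v1 v2 : ℝ) (hM0 : 1 ≤ M0) (hV1 : 0 < V1)
    (hv1 : 0 < v1) (hv2 : 0 < v2)
    -- (a) upper d-dimensional bound
    (ha : ∀ x ∈ S, ∀ r : ℝ, 0 < r → σs (ball x r ∩ S) ≤ ENNReal.ofReal (V1 * r ^ d))
    -- (b) upper (n-1)-dimensional bound away from Γ
    (hb : ∀ x ∈ S, ∀ r : ℝ, 0 < r → r / M0 < Metric.infDist x Γ →
      σs (ball x r ∩ S) ≤
        ENNReal.ofReal (V2 * Metric.infDist x Γ ^ (d + 1 - (n : ℝ)) * r ^ ((n : ℝ) - 1)))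
    -- (c) lower (n-1)-dimensional bound away from Γ
    (hc : ∀ x ∈ S, ∀ r : ℝ, 0 < r → r / M0 ≤ Metric.infDist x Γ →
      ENNReal.ofReal (v1 * Metric.infDist x Γ ^ (d + 1 - (n : ℝ)) * r ^ ((n : ℝ) - 1)) ≤
        σs (ball x r ∩ S))
    -- (d) lower d-dimensional bound near Γ
    (hd' : ∀ x ∈ S, ∀ r : ℝ, 0 < r → Metric.infDist x Γ < r / M0 →
      ENNReal.ofReal (v2 * r ^ d) ≤ σs (ball x r ∩ S)) :
    ∃ C3 : ℝ, 1 < C3 ∧ ∀ x ∈ S, ∀ r : ℝ, 0 < r →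
      σs (ball x (2 * r) ∩ S) ≤ ENNReal.ofReal C3 * σs (ball x r ∩ S) := by
  set Knear := V1 * 2 ^ d / v2 with hKnear
  set Kfar := V2 * 2 ^ ((n : ℝ) - 1) / v1 with hKfar
  set Kmid := V1 * 2 ^ ((n : ℝ) - 1) / v1 with hKmid
  set C3 := max 2 (max Knear (max Kfar Kmid))
  have hC3 : 0 ≤ C3 := zero_le_two.trans (le_max_left _ _)
  refine ⟨C3, one_lt_two.trans_le (le_max_left _ _), fun x hx r hr => ?_⟩
  have h2r : 0 < 2 * r := by positivity
  set δ := Metric.infDist x Γ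
  set e := d + 1 - (n : ℝ)
  rcases lt_or_ge δ (r / M0) with hnear | hr_le
  · refine le_ofReal_mul_of_le_ofReal_of_ofReal_le (ha x hx _ h2r) (hd' x hx r hr hnear) hC3 ?_
    calc V1 * (2 * r) ^ d = Knear * (v2 * r ^ d) := by
          rw [Real.mul_rpow zero_le_two hr.le, hKnear]; field_simp
      _ ≤ C3 * (v2 * r ^ d) := by gcongr; simp [C3]
  have hδ : 0 < δ := (div_pos hr (zero_lt_one.trans_le hM0)).trans_le hr_le
  rcases lt_or_ge (2 * r / M0) δ with hfar | hmid
  · refine le_ofReal_mul_of_le_ofReal_of_ofReal_le (hb x hx _ h2r hfar) (hc x hx r hr hr_le) hC3 ?_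
    calc V2 * δ ^ e * (2 * r) ^ ((n : ℝ) - 1) = Kfar * (v1 * δ ^ e * r ^ ((n : ℝ) - 1)) := by
          rw [Real.mul_rpow zero_le_two hr.le, hKfar]; field_simp
      _ ≤ C3 * (v1 * δ ^ e * r ^ ((n : ℝ) - 1)) := by gcongr; simp [C3]
  · have hδ2r : δ ≤ 2 * r := hmid.trans (div_le_self h2r.le hM0)
    have he : e = d - ((n : ℝ) - 1) := by ring
    refine le_ofReal_mul_of_le_ofReal_of_ofReal_le (ha x hx _ h2r) (hc x hx r hr hr_le) hC3 ?_
    calc V1 * (2 * r) ^ d ≤ V1 * (2 ^ ((n : ℝ) - 1) * (δ ^ e * r ^ ((n : ℝ) - 1))) := by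
          rw [he]; gcongr; exact two_mul_rpow_le_of_le_two_mul hdn.le hδ hδ2r
      _ = Kmid * (v1 * δ ^ e * r ^ ((n : ℝ) - 1)) := by rw [hKmid]; field_simp
      _ ≤ C3 * (v1 * δ ^ e * r ^ ((n : ℝ) - 1)) := by gcongr; simp [C3]

/-- The weighted surface measure `σ⋆` on the boundary `S = ∂Ω_𝔽` of a sawtooth domain is
doubling, given the two-sided Ahlfors-type estimates (a)-(d):
`σ⋆(Δ⋆(x,2r)) ≤ C₃ σ⋆(Δ⋆(x,r))` for all `x ∈ S` and `r > 0`. -/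
theorem sawtooth_surface_measure_doubling {n : ℕ} (hn : 3 ≤ n)
    (d : ℝ) (hd : 0 < d) (hdn : d < (n : ℝ) - 1)
    (Γ S : Set (EuclideanSpace ℝ (Fin n))) (hΓ : IsClosed Γ) (hΓne : Γ.Nonempty)
    (σs : Set (EuclideanSpace ℝ (Fin n)) → ℝ≥0∞)
    (M0 V1 V2 v1 v2 : ℝ) (hM0 : 1 ≤ M0) (hV1 : 0 < V1) (hV2 : 0 < V2)
    (hv1 : 0 < v1) (hv2 : 0 < v2)
    -- (a) upper d-dimensional bound
    (ha : ∀ x ∈ S, ∀ r : ℝ, 0 < r → σs (ball x r ∩ S) ≤ ENNReal.ofReal (V1 * r ^ d))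
    -- (b) upper (n-1)-dimensional bound away from Γ
    (hb : ∀ x ∈ S, ∀ r : ℝ, 0 < r → r / M0 < Metric.infDist x Γ →
      σs (ball x r ∩ S) ≤
        ENNReal.ofReal (V2 * Metric.infDist x Γ ^ (d + 1 - (n : ℝ)) * r ^ ((n : ℝ) - 1)))
    -- (c) lower (n-1)-dimensional bound away from Γ
    (hc : ∀ x ∈ S, ∀ r : ℝ, 0 < r → r / M0 ≤ Metric.infDist x Γ →
      ENNReal.ofReal (v1 * Metric.infDist x Γ ^ (d + 1 - (n : ℝ)) * r ^ ((n : ℝ) - 1)) ≤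
        σs (ball x r ∩ S))
    -- (d) lower d-dimensional bound near Γ
    (hd' : ∀ x ∈ S, ∀ r : ℝ, 0 < r → Metric.infDist x Γ < r / M0 →
      ENNReal.ofReal (v2 * r ^ d) ≤ σs (ball x r ∩ S)) :
    ∃ C3 : ℝ, 1 < C3 ∧ ∀ x ∈ S, ∀ r : ℝ, 0 < r →
      σs (ball x (2 * r) ∩ S) ≤ ENNReal.ofReal C3 * σs (ball x r ∩ S) :=
  sawtooth_surface_measure_doubling_general d hdn Γ S σs M0 V1 V2 v1 v2 hM0 hV1 hv1 hv2 ha hb hc hd'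
end

section
/- Let Γ be d-ADR, Q₀ a dyadic cube, 𝔽 ⊂ Q₀ a disjoint family of dyadic cubes, and μ a dyadically doubling measure on Q₀. Then the projected measure 𝒫_𝔽 μ, defined by 𝒫_𝔽μ(E) = μ(E \ ⋃_j Q_j) + Σ_j [σ(E∩Q_j)/σ(Q_j)] μ(Q_j), is dyadically doubling on Q₀. -/
/-!
A cube `Q` of the grid either lies inside some `Q_j`, where `𝒫_𝔽 μ` is `μ(Q_j)` times the
normalised measure `σ / σ(Q_j)`, or, by the nesting of dyadic cubes, every `Q_j` is either inside
`Q` or disjoint from it, and then `𝒫_𝔽 μ(Q) = μ(Q)`. Comparing a cube with a child therefore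
uses the doubling of `σ`, of `μ`, or, when the child lies in some `Q_j ⊆ Q`, both.
-/

open MeasureTheory Set Function
open scoped ENNReal

namespace DyadicGrid

variable {α ι : Type*}

def IsDyadicallyDoubling (𝔻 : Set (Set α)) (child : Set α → Set α → Prop) (Q0 : Set α)
    (ν : Set α → ℝ≥0∞) (C : ℝ≥0∞) : Prop :=
  ∀ Q ∈ 𝔻, Q ⊆ Q0 → 0 < ν Q ∧ ν Q < ⊤ ∧ ∀ Q', child Q' Q → ν Q ≤ C * ν Q'

theorem IsDyadicallyDoubling.mono {𝔻 : Set (Set α)} {child : Set α → Set α → Prop}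
    {Q0 : Set α} {ν : Set α → ℝ≥0∞} {C C' : ℝ≥0∞} (h : IsDyadicallyDoubling 𝔻 child Q0 ν C)
    (hC : C ≤ C') : IsDyadicallyDoubling 𝔻 child Q0 ν C' := fun Q hQ hQ0 =>
  ⟨(h Q hQ hQ0).1, (h Q hQ hQ0).2.1, fun Q' hQ' =>
    ((h Q hQ hQ0).2.2 Q' hQ').trans (mul_le_mul_left hC _)⟩

theorem exists_subset_or_forall_subset_or_disjoint {𝔻 : Set (Set α)}
    (hnest : ∀ Q ∈ 𝔻, ∀ Q' ∈ 𝔻, (Q ∩ Q').Nonempty → Q ⊆ Q' ∨ Q' ⊆ Q)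
    {Qf : ι → Set α} (hQf : ∀ j, Qf j ∈ 𝔻) {Q : Set α} (hQ : Q ∈ 𝔻) :
    (∃ j, Q ⊆ Qf j) ∨ ∀ j, Qf j ⊆ Q ∨ Disjoint Q (Qf j) := by
  refine or_iff_not_imp_left.mpr fun hno j => ?_
  push Not at hno
  rw [or_iff_not_imp_right, not_disjoint_iff_nonempty_inter]
  exact fun hne => (hnest Q hQ _ (hQf j) hne).resolve_left (hno j)

variable [MeasurableSpace α]

theorem le_measure_div_mul_of_subset {σ : Measure α} {A B : Set α} (hBA : B ⊆ A)
    (hB₀ : σ B ≠ 0) (hB : σ B ≠ ⊤) (x : ℝ≥0∞) : x ≤ σ A / σ B * x := by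
  refine le_mul_of_one_le_left' ?_
  calc (1 : ℝ≥0∞) = σ B / σ B := (ENNReal.div_self hB₀ hB).symm
    _ ≤ σ A / σ B := ENNReal.div_le_div_right (measure_mono hBA) _

/-- The projection `𝒫_𝔽 μ` of `μ` along the family `𝔽 = {Q_j}`, with `σ` as reference measure. -/
noncomputable def projectedMeasure (σ μ : Measure α) (Qf : ι → Set α) (A : Set α) : ℝ≥0∞ :=
  μ (A \ ⋃ j, Qf j) + ∑' j, σ (A ∩ Qf j) / σ (Qf j) * μ (Qf j)

section projectedMeasure

variable {σ μ : Measure α} {Qf : ι → Set α}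

theorem projectedMeasure_of_subset (hQfdisj : Pairwise (Disjoint on Qf)) {A : Set α} {j₀ : ι}
    (hA : A ⊆ Qf j₀) : projectedMeasure σ μ Qf A = σ A / σ (Qf j₀) * μ (Qf j₀) := by
  rw [projectedMeasure, sdiff_eq_empty.mpr (hA.trans (subset_iUnion Qf j₀)), measure_empty,
    zero_add, tsum_eq_single j₀, inter_eq_left.mpr hA]
  intro j hj
  rw [((hQfdisj hj).symm.mono_left hA).inter_eq, measure_empty, ENNReal.zero_div, zero_mul]

theorem projectedMeasure_of_subset_or_disjoint [Countable ι]
    (hQfmeas : ∀ j, MeasurableSet (Qf j)) (hQfdisj : Pairwise (Disjoint on Qf))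
    (hσ : ∀ j, σ (Qf j) ≠ 0 ∧ σ (Qf j) ≠ ⊤) {A : Set α} (hAmeas : MeasurableSet A)
    (hA : ∀ j, Qf j ⊆ A ∨ Disjoint A (Qf j)) : projectedMeasure σ μ Qf A = μ A := by
  have hterm : ∀ j, σ (A ∩ Qf j) / σ (Qf j) * μ (Qf j) = μ (A ∩ Qf j) := by
    intro j
    rcases hA j with hsub | hdisj
    · rw [inter_eq_right.mpr hsub, ENNReal.div_self (hσ j).1 (hσ j).2, one_mul]
    · simp [hdisj.inter_eq]
  have hdisj : Pairwise (Disjoint on fun j => A ∩ Qf j) := fun i j hij =>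
    (hQfdisj hij).mono inter_subset_right inter_subset_right
  rw [projectedMeasure, tsum_congr hterm,
    ← measure_iUnion hdisj fun j => hAmeas.inter (hQfmeas j), ← inter_iUnion]
  exact measure_sdiff_add_inter _ (MeasurableSet.iUnion hQfmeas)

end projectedMeasure

section grid

variable {𝔻 : Set (Set α)} {child : Set α → Set α → Prop} {Q0 : Set α} {σ μ : Measure α}
  {Qf : ι → Set α} {Cσ Cμ : ℝ≥0∞}

theorem projectedMeasure_eq_of_forall_not_subset [Countable ι]
    (hmeas : ∀ Q ∈ 𝔻, MeasurableSet Q)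
    (hnest : ∀ Q ∈ 𝔻, ∀ Q' ∈ 𝔻, (Q ∩ Q').Nonempty → Q ⊆ Q' ∨ Q' ⊆ Q)
    (hQf : ∀ j, Qf j ∈ 𝔻 ∧ Qf j ⊆ Q0) (hQfdisj : Pairwise (Disjoint on Qf))
    (hσ : IsDyadicallyDoubling 𝔻 child Q0 σ Cσ) {Q : Set α} (hQ : Q ∈ 𝔻)
    (hno : ¬∃ j, Q ⊆ Qf j) : projectedMeasure σ μ Qf Q = μ Q :=
  projectedMeasure_of_subset_or_disjoint (fun j => hmeas _ (hQf j).1) hQfdisj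
    (fun j => ⟨(hσ _ (hQf j).1 (hQf j).2).1.ne', (hσ _ (hQf j).1 (hQf j).2).2.1.ne⟩)
    (hmeas Q hQ)
    ((exists_subset_or_forall_subset_or_disjoint hnest (fun j => (hQf j).1) hQ).resolve_left hno)

theorem projectedMeasure_pos_lt_top [Countable ι] (hmeas : ∀ Q ∈ 𝔻, MeasurableSet Q)
    (hnest : ∀ Q ∈ 𝔻, ∀ Q' ∈ 𝔻, (Q ∩ Q').Nonempty → Q ⊆ Q' ∨ Q' ⊆ Q)
    (hQf : ∀ j, Qf j ∈ 𝔻 ∧ Qf j ⊆ Q0) (hQfdisj : Pairwise (Disjoint on Qf))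
    (hσ : IsDyadicallyDoubling 𝔻 child Q0 σ Cσ) (hμ : IsDyadicallyDoubling 𝔻 child Q0 μ Cμ)
    {Q : Set α} (hQ : Q ∈ 𝔻) (hQ0 : Q ⊆ Q0) :
    0 < projectedMeasure σ μ Qf Q ∧ projectedMeasure σ μ Qf Q < ⊤ := by
  by_cases hin : ∃ j, Q ⊆ Qf j
  · obtain ⟨j, hj⟩ := hin
    obtain ⟨hσQ, hσQ', -⟩ := hσ Q hQ hQ0
    obtain ⟨hσj, hσj', -⟩ := hσ _ (hQf j).1 (hQf j).2
    obtain ⟨hμj, hμj', -⟩ := hμ _ (hQf j).1 (hQf j).2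
    rw [projectedMeasure_of_subset hQfdisj hj]
    exact ⟨ENNReal.mul_pos (ENNReal.div_pos hσQ.ne' hσj'.ne).ne' hμj.ne',
      ENNReal.mul_lt_top (ENNReal.div_lt_top hσQ'.ne hσj.ne') hμj'⟩
  · rw [projectedMeasure_eq_of_forall_not_subset hmeas hnest hQf hQfdisj hσ hQ hin]
    exact ⟨(hμ Q hQ hQ0).1, (hμ Q hQ hQ0).2.1⟩

theorem projectedMeasure_le_mul_child [Countable ι] (hmeas : ∀ Q ∈ 𝔻, MeasurableSet Q)
    (hchild : ∀ Q ∈ 𝔻, ∀ Q', child Q' Q → Q' ∈ 𝔻 ∧ Q' ⊆ Q)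
    (hnest : ∀ Q ∈ 𝔻, ∀ Q' ∈ 𝔻, (Q ∩ Q').Nonempty → Q ⊆ Q' ∨ Q' ⊆ Q)
    (hQf : ∀ j, Qf j ∈ 𝔻 ∧ Qf j ⊆ Q0) (hQfdisj : Pairwise (Disjoint on Qf))
    (hσ : IsDyadicallyDoubling 𝔻 child Q0 σ Cσ) (hμ : IsDyadicallyDoubling 𝔻 child Q0 μ Cμ)
    (hCσ : 1 ≤ Cσ) (hCμ : 1 ≤ Cμ) {Q Q' : Set α} (hQ : Q ∈ 𝔻) (hQ0 : Q ⊆ Q0)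
    (hQ' : child Q' Q) :
    projectedMeasure σ μ Qf Q ≤ Cσ * Cμ * projectedMeasure σ μ Qf Q' := by
  obtain ⟨hQ'𝔻, hQ'Q⟩ := hchild Q hQ Q' hQ'
  have hσQ : σ Q ≤ Cσ * σ Q' := (hσ Q hQ hQ0).2.2 Q' hQ'
  have hμQ : μ Q ≤ Cμ * μ Q' := (hμ Q hQ hQ0).2.2 Q' hQ'
  by_cases hin : ∃ j, Q ⊆ Qf j
  · obtain ⟨j, hj⟩ := hin
    rw [projectedMeasure_of_subset hQfdisj hj, projectedMeasure_of_subset hQfdisj (hQ'Q.trans hj)]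
    calc σ Q / σ (Qf j) * μ (Qf j) ≤ Cσ * (σ Q' / σ (Qf j) * μ (Qf j)) := by
          rw [← mul_assoc, ← mul_div_assoc]; gcongr
      _ ≤ Cσ * Cμ * (σ Q' / σ (Qf j) * μ (Qf j)) := by gcongr; exact le_mul_of_one_le_right' hCμ
  rw [projectedMeasure_eq_of_forall_not_subset hmeas hnest hQf hQfdisj hσ hQ hin]
  by_cases hin' : ∃ j, Q' ⊆ Qf j
  · obtain ⟨j, hj⟩ := hin'
    obtain ⟨hσj, hσj', -⟩ := hσ _ (hQf j).1 (hQf j).2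
    obtain ⟨x, hx⟩ : Q'.Nonempty :=
      nonempty_of_measure_ne_zero (hσ Q' hQ'𝔻 (hQ'Q.trans hQ0)).1.ne'
    have hjQ : Qf j ⊆ Q :=
      ((exists_subset_or_forall_subset_or_disjoint hnest (fun j => (hQf j).1) hQ).resolve_left
        hin j).resolve_right (not_disjoint_iff.mpr ⟨x, hQ'Q hx, hj hx⟩)
    rw [projectedMeasure_of_subset hQfdisj hj]
    calc μ Q ≤ Cμ * μ Q' := hμQ
      _ ≤ Cμ * μ (Qf j) := by gcongr
      _ ≤ Cμ * (σ Q / σ (Qf j) * μ (Qf j)) := by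
          gcongr; exact le_measure_div_mul_of_subset hjQ hσj.ne' hσj'.ne _
      _ ≤ Cμ * (Cσ * σ Q' / σ (Qf j) * μ (Qf j)) := by gcongr
      _ = Cσ * Cμ * (σ Q' / σ (Qf j) * μ (Qf j)) := by rw [mul_div_assoc]; ring
  · rw [projectedMeasure_eq_of_forall_not_subset hmeas hnest hQf hQfdisj hσ hQ'𝔻 hin']
    calc μ Q ≤ Cμ * μ Q' := hμQ
      _ ≤ Cσ * Cμ * μ Q' := by gcongr; exact le_mul_of_one_le_left' hCσ

theorem isDyadicallyDoubling_projectedMeasure [Countable ι] (hmeas : ∀ Q ∈ 𝔻, MeasurableSet Q)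
    (hchild : ∀ Q ∈ 𝔻, ∀ Q', child Q' Q → Q' ∈ 𝔻 ∧ Q' ⊆ Q)
    (hnest : ∀ Q ∈ 𝔻, ∀ Q' ∈ 𝔻, (Q ∩ Q').Nonempty → Q ⊆ Q' ∨ Q' ⊆ Q)
    (hQf : ∀ j, Qf j ∈ 𝔻 ∧ Qf j ⊆ Q0) (hQfdisj : Pairwise (Disjoint on Qf))
    (hσ : IsDyadicallyDoubling 𝔻 child Q0 σ Cσ) (hμ : IsDyadicallyDoubling 𝔻 child Q0 μ Cμ)
    (hCσ : 1 ≤ Cσ) (hCμ : 1 ≤ Cμ) :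
    IsDyadicallyDoubling 𝔻 child Q0 (projectedMeasure σ μ Qf) (Cσ * Cμ) := fun _ hQ hQ0 =>
  ⟨(projectedMeasure_pos_lt_top hmeas hnest hQf hQfdisj hσ hμ hQ hQ0).1,
    (projectedMeasure_pos_lt_top hmeas hnest hQf hQfdisj hσ hμ hQ hQ0).2,
    fun _ hQ' =>
      projectedMeasure_le_mul_child hmeas hchild hnest hQf hQfdisj hσ hμ hCσ hCμ hQ hQ0 hQ'⟩

end grid

end DyadicGrid

open DyadicGrid

theorem projection_of_dyadically_doubling_general {n : ℕ}
    (d : ℝ)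
    (𝔻 : Set (Set (EuclideanSpace ℝ (Fin n))))
    (child : Set (EuclideanSpace ℝ (Fin n)) → Set (EuclideanSpace ℝ (Fin n)) → Prop)
    (Q0 : Set (EuclideanSpace ℝ (Fin n)))
    -- structure of the dyadic grid
    (hmeas : ∀ Q ∈ 𝔻, MeasurableSet Q)
    (hchild : ∀ Q ∈ 𝔻, ∀ Q', child Q' Q → Q' ∈ 𝔻 ∧ Q' ⊆ Q)
    (hnest : ∀ Q ∈ 𝔻, ∀ Q' ∈ 𝔻, (Q ∩ Q').Nonempty → Q ⊆ Q' ∨ Q' ⊆ Q)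
    -- σ = H^d|_Γ is comparable between a cube and each of its children
    (Cσ : ℝ)
    (hσpos : ∀ Q ∈ 𝔻, 0 < μH[d] Q ∧ μH[d] Q < ⊤)
    (hσcomp : ∀ Q ∈ 𝔻, ∀ Q', child Q' Q → μH[d] Q ≤ ENNReal.ofReal Cσ * μH[d] Q')
    -- 𝔽 = {Q_j} is a disjoint family of dyadic cubes inside Q₀
    (ι : Type*) [Countable ι] (Qf : ι → Set (EuclideanSpace ℝ (Fin n)))
    (hQf : ∀ j, Qf j ∈ 𝔻 ∧ Qf j ⊆ Q0) (hQfdisj : Pairwise (Function.onFun Disjoint Qf))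
    -- μ is dyadically doubling on Q₀
    (μ : Measure (EuclideanSpace ℝ (Fin n))) (Cμ : ℝ)
    (hμ : ∀ Q ∈ 𝔻, Q ⊆ Q0 → 0 < μ Q ∧ μ Q < ⊤ ∧
      ∀ Q', child Q' Q → μ Q ≤ ENNReal.ofReal Cμ * μ Q')
    -- νP = 𝒫_𝔽 μ is the projected measure
    (νP : Set (EuclideanSpace ℝ (Fin n)) → ℝ≥0∞)
    (hνP : ∀ A : Set (EuclideanSpace ℝ (Fin n)), νP A = μ (A \ ⋃ j, Qf j) +
      ∑' j, (μH[d] (A ∩ Qf j) / μH[d] (Qf j)) * μ (Qf j)) :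
    ∃ C' : ℝ, 0 < C' ∧ ∀ Q ∈ 𝔻, Q ⊆ Q0 →
      0 < νP Q ∧ νP Q < ⊤ ∧ ∀ Q', child Q' Q → νP Q ≤ ENNReal.ofReal C' * νP Q' := by
  refine ⟨max 1 Cσ * max 1 Cμ, by positivity, ?_⟩
  have hσ : IsDyadicallyDoubling 𝔻 child Q0 μH[d] (ENNReal.ofReal (max 1 Cσ)) :=
    IsDyadicallyDoubling.mono (fun Q hQ _ => ⟨(hσpos Q hQ).1, (hσpos Q hQ).2, hσcomp Q hQ⟩)
      (ENNReal.ofReal_le_ofReal (le_max_right _ _))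
  have hμ' : IsDyadicallyDoubling 𝔻 child Q0 μ (ENNReal.ofReal (max 1 Cμ)) :=
    IsDyadicallyDoubling.mono hμ (ENNReal.ofReal_le_ofReal (le_max_right _ _))
  have hνP' : νP = projectedMeasure μH[d] μ Qf := funext hνP
  rw [hνP', ENNReal.ofReal_mul (by positivity)]
  exact isDyadicallyDoubling_projectedMeasure hmeas hchild hnest hQf hQfdisj hσ hμ'
    (by simp) (by simp)

/-- The projection `𝒫_𝔽 μ` of a dyadically doubling measure `μ` on `Q₀` along a disjoint
family `𝔽 ⊆ 𝔻_{Q₀}` is again dyadically doubling on `Q₀`. -/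
theorem projection_of_dyadically_doubling {n : ℕ}
    (Γ : Set (EuclideanSpace ℝ (Fin n))) (hΓ : IsClosed Γ) (d : ℝ) (hd : 0 < d)
    (𝔻 : Set (Set (EuclideanSpace ℝ (Fin n))))
    (child : Set (EuclideanSpace ℝ (Fin n)) → Set (EuclideanSpace ℝ (Fin n)) → Prop)
    (Q0 : Set (EuclideanSpace ℝ (Fin n))) (hQ0 : Q0 ∈ 𝔻)
    -- structure of the dyadic grid
    (hmeas : ∀ Q ∈ 𝔻, MeasurableSet Q) (hQΓ : ∀ Q ∈ 𝔻, Q ⊆ Γ)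
    (hchild : ∀ Q ∈ 𝔻, ∀ Q', child Q' Q → Q' ∈ 𝔻 ∧ Q' ⊆ Q)
    (hpart : ∀ Q ∈ 𝔻, ∃ c : Finset (Set (EuclideanSpace ℝ (Fin n))),
      (∀ Q' ∈ c, child Q' Q) ∧
      (c : Set (Set (EuclideanSpace ℝ (Fin n)))).PairwiseDisjoint id ∧
      ⋃₀ (c : Set (Set (EuclideanSpace ℝ (Fin n)))) = Q)
    (N : ℕ) (hN : ∀ Q ∈ 𝔻, ∀ c : Finset (Set (EuclideanSpace ℝ (Fin n))),
      (∀ Q' ∈ c, child Q' Q) → c.card ≤ N)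
    (hnest : ∀ Q ∈ 𝔻, ∀ Q' ∈ 𝔻, (Q ∩ Q').Nonempty → Q ⊆ Q' ∨ Q' ⊆ Q)
    -- σ = H^d|_Γ is comparable between a cube and each of its children
    (Cσ : ℝ) (hCσ : 0 < Cσ)
    (hσpos : ∀ Q ∈ 𝔻, 0 < μH[d] Q ∧ μH[d] Q < ⊤)
    (hσcomp : ∀ Q ∈ 𝔻, ∀ Q', child Q' Q → μH[d] Q ≤ ENNReal.ofReal Cσ * μH[d] Q')
    -- 𝔽 = {Q_j} is a disjoint family of dyadic cubes inside Q₀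
    (ι : Type*) [Countable ι] (Qf : ι → Set (EuclideanSpace ℝ (Fin n)))
    (hQf : ∀ j, Qf j ∈ 𝔻 ∧ Qf j ⊆ Q0) (hQfdisj : Pairwise (Function.onFun Disjoint Qf))
    -- μ is dyadically doubling on Q₀
    (μ : Measure (EuclideanSpace ℝ (Fin n))) (Cμ : ℝ) (hCμ : 0 < Cμ)
    (hμ : ∀ Q ∈ 𝔻, Q ⊆ Q0 → 0 < μ Q ∧ μ Q < ⊤ ∧
      ∀ Q', child Q' Q → μ Q ≤ ENNReal.ofReal Cμ * μ Q')
    -- νP = 𝒫_𝔽 μ is the projected measure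
    (νP : Set (EuclideanSpace ℝ (Fin n)) → ℝ≥0∞)
    (hνP : ∀ A : Set (EuclideanSpace ℝ (Fin n)), νP A = μ (A \ ⋃ j, Qf j) +
      ∑' j, (μH[d] (A ∩ Qf j) / μH[d] (Qf j)) * μ (Qf j)) :
    ∃ C' : ℝ, 0 < C' ∧ ∀ Q ∈ 𝔻, Q ⊆ Q0 →
      0 < νP Q ∧ νP Q < ⊤ ∧ ∀ Q', child Q' Q → νP Q ≤ ENNReal.ofReal C' * νP Q' :=
  projection_of_dyadically_doubling_general d 𝔻 child Q0 hmeas hchild hnest Cσ hσpos hσcomp ι Qf hQf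
    hQfdisj μ Cμ hμ νP hνP
end
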